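/- For the N-qubit one-axis twisted state |ψ⟩ = exp(-iθ J_x²/2)|1⟩^{⊗N} (N ≥ 2), the two-spin correlation satisfies ⟨σ_{1z}σ_{2z}⟩ = (1 + cos^{N-2}θ)/2. -/

import Mathlib

open Matrix Complex Finset

noncomputable section OneAxisTwisting

/-- Pauli x matrix in the basis `{|0⟩, |1⟩}`. -/
def pauliX : Matrix (Fin 2) (Fin 2) ℂ := !![0, 1; 1, 0]

/-- Pauli z matrix in the basis `{|0⟩, |1⟩}`. -/
def pauliZ : Matrix (Fin 2) (Fin 2) ℂ := !![1, 0; 0, -1]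

/-- The single-qubit operator `m` acting on site `k` of `N` qubits (identity elsewhere),
as a matrix on the computational basis indexed by `Fin N → Fin 2`. -/
def siteOp (N : ℕ) (k : Fin N) (m : Matrix (Fin 2) (Fin 2) ℂ) :
    Matrix (Fin N → Fin 2) (Fin N → Fin 2) ℂ :=
  Matrix.of fun s t =>
    m (s k) (t k) * ∏ j ∈ Finset.univ.erase k, (if s j = t j then (1 : ℂ) else 0)

/-- The collective spin operator `J_x = (1/2) Σ_k σ_{k,x}`. -/
def Jx (N : ℕ) : Matrix (Fin N → Fin 2) (Fin N → Fin 2) ℂ :=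
  (1 / 2 : ℂ) • ∑ k : Fin N, siteOp N k pauliX

/-- The all-down state `|1⟩^{⊗N}` as a vector. -/
def allDown (N : ℕ) : (Fin N → Fin 2) → ℂ :=
  fun s => if s = (fun _ => 1) then 1 else 0

/-- The one-axis twisted state `exp(-iθ J_x²/2) |1⟩^{⊗N}`. -/
def oneAxisTwisted (N : ℕ) (θ : ℝ) : (Fin N → Fin 2) → ℂ :=
  (NormedSpace.exp ((-(θ / 2 : ℂ) * Complex.I) • (Jx N * Jx N))).mulVec (allDown N)

/-- Expectation value `⟨ψ|O|ψ⟩` in the one-axis twisted state. -/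
def expVal (N : ℕ) (θ : ℝ) (O : Matrix (Fin N → Fin 2) (Fin N → Fin 2) ℂ) : ℂ :=
  star (oneAxisTwisted N θ) ⬝ᵥ O.mulVec (oneAxisTwisted N θ)

/-!
The Walsh–Hadamard transform `W = H^{⊗N}` is a self-inverse unitary exchanging `σ_x` and `σ_z` on
every site. It diagonalises `J_x`, with eigenvalue `m(u) = ½ ∑ⱼ s(uⱼ)` (`s = ±1`) on the basis
vector `u`, turns `σ_{1z} σ_{2z}` into the double flip `σ_{1x} σ_{2x}`, and sends `|1⟩^{⊗N}` to the
vector with amplitudes `2^{-N/2} ∏ⱼ s(uⱼ)`. Flipping the first two spins of `u = (a, b, r)` shifts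
`m` by `-(s(a) + s(b))`, so the amplitudes `φ = Wψ` of the twisted state satisfy
`conj φ(u) · φ(flip u) = 2^{-N} exp(iθ (s(a) + s(b))/2 · ∑ⱼ s(rⱼ))`.
This factorises over the remaining `N - 2` spins, and summing over `r` and then over `a, b` gives
`¼ ∑_{a,b} cos^{N-2}(θ (s(a) + s(b))/2) = (1 + cos^{N-2} θ)/2`.
-/

section PiMatrix

variable {ι α R : Type*} [Fintype ι] [CommSemiring R]

def piMatrix (A : ι → Matrix α α R) : Matrix (ι → α) (ι → α) R :=
  Matrix.of fun s t => ∏ i, A i (s i) (t i)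

@[simp]
lemma piMatrix_apply (A : ι → Matrix α α R) (s t : ι → α) :
    piMatrix A s t = ∏ i, A i (s i) (t i) := rfl

lemma piMatrix_mul [DecidableEq ι] [Fintype α] (A B : ι → Matrix α α R) :
    piMatrix A * piMatrix B = piMatrix (A * B) := by
  ext s t
  simp only [mul_apply, piMatrix_apply, Pi.mul_apply, ← prod_mul_distrib, Fintype.prod_sum]

lemma piMatrix_one [DecidableEq α] : piMatrix (1 : ι → Matrix α α R) = 1 := by
  ext s t
  simp [one_apply, Fintype.prod_boole, funext_iff]

lemma conjTranspose_piMatrix [StarRing R] (A : ι → Matrix α α R) :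
    (piMatrix A)ᴴ = piMatrix fun i => (A i)ᴴ := by
  ext s t
  simp [star_prod]

end PiMatrix

lemma siteOp_eq_piMatrix (N : ℕ) (k : Fin N) (m : Matrix (Fin 2) (Fin 2) ℂ) :
    siteOp N k m = piMatrix (Pi.mulSingle k m) := by
  ext s t
  rw [siteOp, of_apply, piMatrix_apply, ← mul_prod_erase _ _ (mem_univ k), Pi.mulSingle_eq_same]
  refine congrArg _ (prod_congr rfl fun j hj => ?_)
  simp [Pi.mulSingle_eq_of_ne (mem_erase.1 hj).1, one_apply]

lemma siteOp_apply (N : ℕ) (k : Fin N) (m : Matrix (Fin 2) (Fin 2) ℂ) (s t : Fin N → Fin 2) :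
    siteOp N k m s t = if ∀ j ≠ k, s j = t j then m (s k) (t k) else 0 := by
  simp only [siteOp, of_apply, prod_boole, mem_erase, mem_univ, and_true, mul_ite, mul_one,
    mul_zero]

lemma siteOp_diagonal (N : ℕ) (k : Fin N) (d : Fin 2 → ℂ) :
    siteOp N k (diagonal d) = diagonal fun s => d (s k) := by
  ext s t
  rw [siteOp_apply]
  by_cases hst : s = t
  · simp [hst]
  · rw [diagonal_apply_ne _ hst, ite_eq_right_iff]
    intro hoff
    exact diagonal_apply_ne _ fun hk => hst (funext fun j => by
      by_cases hj : j = k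
      · exact hj ▸ hk
      · exact hoff j hj)

lemma siteOp_mulVec_apply (N : ℕ) (k : Fin N) (m : Matrix (Fin 2) (Fin 2) ℂ)
    (φ : (Fin N → Fin 2) → ℂ) (s : Fin N → Fin 2) :
    (siteOp N k m *ᵥ φ) s = ∑ a, m (s k) a * φ (Function.update s k a) := by
  have hφ : ∀ a, m (s k) a * φ (Function.update s k a) =
      ∑ t, if t = Function.update s k a then m (s k) a * φ t else 0 := fun a => by
    simp
  simp only [hφ, mulVec, dotProduct, siteOp_apply]
  rw [sum_comm]
  refine sum_congr rfl fun t _ => ?_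
  have hoff : (∀ j ≠ k, t j = s j) ↔ ∀ j ≠ k, s j = t j := forall₂_congr fun _ _ => eq_comm
  simp [Function.eq_update_iff, ite_and, hoff]

def spinSign : Fin 2 → ℝ := ![1, -1]

lemma spinSign_rev (a : Fin 2) : spinSign a.rev = -spinSign a := by
  fin_cases a <;> simp [spinSign, Fin.rev]

lemma spinSign_mul_self (a : Fin 2) : spinSign a * spinSign a = 1 := by
  fin_cases a <;> norm_num [spinSign]

lemma pauliZ_eq_diagonal : pauliZ = diagonal fun a => (spinSign a : ℂ) := by
  ext a b
  fin_cases a <;> fin_cases b <;> simp [pauliZ, spinSign]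

lemma siteOp_pauliX_mulVec_apply (N : ℕ) (k : Fin N) (φ : (Fin N → Fin 2) → ℂ)
    (s : Fin N → Fin 2) :
    (siteOp N k pauliX *ᵥ φ) s = φ (Function.update s k (s k).rev) := by
  rw [siteOp_mulVec_apply, Fin.sum_univ_two]
  generalize s k = a
  fin_cases a <;> simp [pauliX]

def hadamardGate : Matrix (Fin 2) (Fin 2) ℂ := ((√2 : ℝ) : ℂ)⁻¹ • !![1, 1; 1, -1]

lemma inv_sqrt_two_mul_self : ((√2 : ℝ) : ℂ)⁻¹ * ((√2 : ℝ) : ℂ)⁻¹ = 2⁻¹ := by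
  rw [← mul_inv, ← ofReal_mul, Real.mul_self_sqrt zero_le_two, ofReal_ofNat]

lemma hadamardGate_mul_self : hadamardGate * hadamardGate = 1 := by
  ext a b
  fin_cases a <;> fin_cases b <;>
    norm_num [hadamardGate, mul_apply, Fin.sum_univ_two, inv_sqrt_two_mul_self]

lemma conjTranspose_hadamardGate : hadamardGateᴴ = hadamardGate := by
  ext a b
  fin_cases a <;> fin_cases b <;> simp [hadamardGate, ← ofReal_inv]

lemma hadamardGate_mul_pauliZ_mul_hadamardGate : hadamardGate * pauliZ * hadamardGate = pauliX := by
  ext a b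
  fin_cases a <;> fin_cases b <;>
    norm_num [hadamardGate, pauliZ, pauliX, mul_apply, Fin.sum_univ_two, inv_sqrt_two_mul_self]

lemma hadamardGate_apply_one (a : Fin 2) : hadamardGate a 1 = ((√2 : ℝ) : ℂ)⁻¹ * spinSign a := by
  fin_cases a <;> simp [hadamardGate, spinSign]

lemma piMatrix_const_mul_siteOp_mul {N : ℕ} {U : Matrix (Fin 2) (Fin 2) ℂ} (hU : U * U = 1)
    (k : Fin N) (m : Matrix (Fin 2) (Fin 2) ℂ) :
    piMatrix (fun _ => U) * siteOp N k m * piMatrix (fun _ => U) = siteOp N k (U * m * U) := by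
  simp only [siteOp_eq_piMatrix, piMatrix_mul]
  congr 1
  funext j
  by_cases hj : j = k
  · subst hj; simp
  · simp [hj, hU]

def walshHadamard (N : ℕ) : Matrix (Fin N → Fin 2) (Fin N → Fin 2) ℂ :=
  piMatrix fun _ => hadamardGate

lemma walshHadamard_mul_self (N : ℕ) : walshHadamard N * walshHadamard N = 1 := by
  rw [walshHadamard, piMatrix_mul, ← piMatrix_one]
  exact congrArg piMatrix (funext fun _ => hadamardGate_mul_self)

lemma conjTranspose_walshHadamard (N : ℕ) : (walshHadamard N)ᴴ = walshHadamard N := by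
  simp [walshHadamard, conjTranspose_piMatrix, conjTranspose_hadamardGate]

lemma walshHadamard_mul_siteOp_pauliZ_mul (N : ℕ) (k : Fin N) :
    walshHadamard N * siteOp N k pauliZ * walshHadamard N = siteOp N k pauliX := by
  rw [walshHadamard, piMatrix_const_mul_siteOp_mul hadamardGate_mul_self,
    hadamardGate_mul_pauliZ_mul_hadamardGate]

def totalSpinZ {N : ℕ} (s : Fin N → Fin 2) : ℝ := (∑ j, spinSign (s j)) / 2

lemma Jx_eq_walshHadamard_conj (N : ℕ) :
    Jx N = walshHadamard N * diagonal (fun s => (totalSpinZ s : ℂ)) * walshHadamard N := by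
  have hZ : (1 / 2 : ℂ) • ∑ k, siteOp N k pauliZ = diagonal fun s => (totalSpinZ s : ℂ) := by
    ext s t
    by_cases hst : s = t
    · simp [hst, pauliZ_eq_diagonal, siteOp_diagonal, totalSpinZ, Matrix.sum_apply, div_eq_inv_mul]
    · simp [hst, pauliZ_eq_diagonal, siteOp_diagonal, Matrix.sum_apply]
  simp only [Jx, ← hZ, mul_smul_comm, smul_mul_assoc, mul_sum, sum_mul,
    walshHadamard_mul_siteOp_pauliZ_mul]

lemma conj_mul_conj_of_mul_self_eq_one {M : Type*} [Monoid M] {u : M} (hu : u * u = 1)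
    (a b : M) : u * a * u * (u * b * u) = u * (a * b) * u := by
  simp only [mul_assoc]
  rw [← mul_assoc u u, hu, one_mul]

lemma exp_conj_of_mul_self_eq_one {n : Type*} [Fintype n] [DecidableEq n] {U : Matrix n n ℂ}
    (hU : U * U = 1) (A : Matrix n n ℂ) :
    NormedSpace.exp (U * A * U) = U * NormedSpace.exp A * U := by
  simpa using Matrix.exp_units_conj ⟨U, U, hU, hU⟩ A

lemma exp_smul_Jx_mul_Jx (N : ℕ) (c : ℂ) :
    NormedSpace.exp (c • (Jx N * Jx N)) =
      walshHadamard N * diagonal (fun s => Complex.exp (c * (totalSpinZ s : ℂ) ^ 2)) *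
        walshHadamard N := by
  rw [Jx_eq_walshHadamard_conj, conj_mul_conj_of_mul_self_eq_one (walshHadamard_mul_self N), ← Matrix.smul_mul, ← Matrix.mul_smul, diagonal_mul_diagonal,
    ← diagonal_smul, exp_conj_of_mul_self_eq_one (walshHadamard_mul_self N), exp_diagonal]
  congr 3
  funext s
  simp [Complex.exp_eq_exp_ℂ, sq]

def oneAxisTwistedXBasis (N : ℕ) (θ : ℝ) (u : Fin N → Fin 2) : ℂ :=
  (((√2)⁻¹ ^ N * ∏ j, spinSign (u j) : ℝ) : ℂ) * Complex.exp (-(θ / 2 * totalSpinZ u ^ 2 : ℝ) * I)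

lemma walshHadamard_mulVec_oneAxisTwisted (N : ℕ) (θ : ℝ) :
    walshHadamard N *ᵥ oneAxisTwisted N θ = oneAxisTwistedXBasis N θ := by
  rw [oneAxisTwisted, exp_smul_Jx_mul_Jx, mulVec_mulVec, ← Matrix.mul_assoc, ← Matrix.mul_assoc,
    walshHadamard_mul_self, Matrix.one_mul]
  funext u
  simp only [oneAxisTwistedXBasis, allDown, mulVec, dotProduct, walshHadamard, diagonal_mul,
    piMatrix_apply, mul_ite, mul_one, mul_zero, sum_ite_eq', mem_univ, if_true,
    hadamardGate_apply_one, prod_mul_distrib, prod_const, card_univ, Fintype.card_fin, inv_pow,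
    ofReal_mul, ofReal_inv, ofReal_pow, ofReal_prod, ofReal_div, ofReal_ofNat, neg_mul]
  ring_nf

lemma dotProduct_star_mulVec_conj {n R : Type*} [Fintype n] [DecidableEq n] [CommSemiring R]
    [StarRing R] {U : Matrix n n R} (hU : U * U = 1) (hUh : Uᴴ = U) (O : Matrix n n R)
    (v : n → R) :
    star (U *ᵥ v) ⬝ᵥ (U * O * U) *ᵥ (U *ᵥ v) = star v ⬝ᵥ O *ᵥ v := by
  rw [mulVec_mulVec, Matrix.mul_assoc, Matrix.mul_assoc, hU, Matrix.mul_one, star_mulVec,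
    ← dotProduct_mulVec, mulVec_mulVec, hUh, ← Matrix.mul_assoc, hU, Matrix.one_mul]

lemma expVal_siteOp_pauliZ_mul_siteOp_pauliZ {N : ℕ} (θ : ℝ) (k₀ k₁ : Fin N) :
    expVal N θ (siteOp N k₀ pauliZ * siteOp N k₁ pauliZ) =
      star (walshHadamard N *ᵥ oneAxisTwisted N θ) ⬝ᵥ
        (siteOp N k₀ pauliX * siteOp N k₁ pauliX) *ᵥ (walshHadamard N *ᵥ oneAxisTwisted N θ) := by
  rw [← walshHadamard_mul_siteOp_pauliZ_mul, ← walshHadamard_mul_siteOp_pauliZ_mul,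
    conj_mul_conj_of_mul_self_eq_one (walshHadamard_mul_self N), dotProduct_star_mulVec_conj (walshHadamard_mul_self N) (conjTranspose_walshHadamard N), expVal]

lemma siteOp_pauliX_mul_siteOp_pauliX_mulVec_cons_cons {n : ℕ} (φ : (Fin (n + 2) → Fin 2) → ℂ)
    (a b : Fin 2) (r : Fin n → Fin 2) :
    ((siteOp (n + 2) 0 pauliX * siteOp (n + 2) 1 pauliX) *ᵥ φ) (Fin.cons a (Fin.cons b r)) =
      φ (Fin.cons a.rev (Fin.cons b.rev r)) := by
  rw [← mulVec_mulVec, siteOp_pauliX_mulVec_apply, siteOp_pauliX_mulVec_apply]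
  simp only [Fin.cons_zero, Fin.update_cons_zero]
  rw [show (1 : Fin (n + 2)) = Fin.succ 0 from rfl, ← Fin.cons_update, Fin.update_cons_zero,
    Fin.cons_succ, Fin.cons_zero]

lemma sum_fun_fin_succ {M α : Type*} [AddCommMonoid M] [Fintype α] {n : ℕ}
    (f : (Fin (n + 1) → α) → M) : ∑ u, f u = ∑ a, ∑ r, f (Fin.cons a r) := by
  rw [← (Fin.consEquiv fun _ => α).sum_comp, Fintype.sum_prod_type]
  rfl

lemma sum_exp_mul_sum_spinSign (n : ℕ) (κ : ℝ) :
    ∑ r : Fin n → Fin 2, Complex.exp ((κ * ∑ j, spinSign (r j) : ℝ) * I) =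
      (2 * Real.cos κ) ^ n := by
  have hterm : ∀ r : Fin n → Fin 2, Complex.exp ((κ * ∑ j, spinSign (r j) : ℝ) * I) =
      ∏ j, Complex.exp ((κ * spinSign (r j) : ℝ) * I) := fun r => by
    rw [← Complex.exp_sum]
    push_cast
    rw [mul_sum, sum_mul]
  have hpair : ∑ v, Complex.exp ((κ * spinSign v : ℝ) * I) = 2 * Real.cos κ := by
    simp only [Fin.sum_univ_two, spinSign, cons_val_zero, cons_val_one, cons_val_fin_one, mul_one,
      mul_neg, ofReal_neg, exp_mul_I, cos_neg, sin_neg, ofReal_cos]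
    ring
  simp_rw [hterm, ← hpair, Fintype.sum_pow]

lemma star_oneAxisTwistedXBasis_mul_flip {n : ℕ} (θ : ℝ) (a b : Fin 2) (r : Fin n → Fin 2) :
    star (oneAxisTwistedXBasis (n + 2) θ (Fin.cons a (Fin.cons b r))) *
        oneAxisTwistedXBasis (n + 2) θ (Fin.cons a.rev (Fin.cons b.rev r)) =
      2⁻¹ ^ (n + 2) * Complex.exp
        ((θ / 2 * (spinSign a + spinSign b) * ∑ j, spinSign (r j) : ℝ) * I) := by
  simp only [oneAxisTwistedXBasis, totalSpinZ, Fin.sum_univ_succ, Fin.prod_univ_succ,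
    Fin.cons_zero, Fin.cons_succ, spinSign_rev]
  have hstar : ∀ p q : ℝ, star ((p : ℂ) * cexp (-(q : ℂ) * I)) = p * cexp (q * I) := by
    intro p q
    simp [← Complex.exp_conj]
  set x := spinSign a
  set y := spinSign b
  set R := ∑ j, spinSign (r j)
  set P := ∏ j, spinSign (r j)
  have hP : P * P = 1 := by simp [P, ← prod_mul_distrib, spinSign_mul_self]
  have hamp : (√2)⁻¹ ^ (n + 2) * (x * (y * P)) * ((√2)⁻¹ ^ (n + 2) * (-x * (-y * P))) =
      2⁻¹ ^ (n + 2) := by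
    have hsqrt : (√2)⁻¹ * (√2)⁻¹ = (2⁻¹ : ℝ) := by
      rw [← mul_inv, Real.mul_self_sqrt zero_le_two]
    calc _ = ((√2)⁻¹ * (√2)⁻¹) ^ (n + 2) * (x * x) * (y * y) * (P * P) := by ring
      _ = _ := by rw [hsqrt, spinSign_mul_self, spinSign_mul_self, hP, mul_one, mul_one, mul_one]
  rw [hstar, mul_mul_mul_comm, ← ofReal_mul, hamp, ← Complex.exp_add, ← add_mul]
  push_cast
  congr 2
  ring

/-- For the one-axis twisted state on `N ≥ 2` qubits,
`⟨σ_{1z} σ_{2z}⟩ = (1 + cos^{N-2} θ)/2`. -/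
theorem oneAxisTwisted_sigma_zz (N : ℕ) (hN : 2 ≤ N) (θ : ℝ) :
    expVal N θ (siteOp N ⟨0, by omega⟩ pauliZ * siteOp N ⟨1, by omega⟩ pauliZ) =
      (1 + ((Real.cos θ : ℂ)) ^ (N - 2)) / 2 := by
  obtain ⟨n, rfl⟩ : ∃ n, N = n + 2 := ⟨N - 2, by omega⟩
  rw [expVal_siteOp_pauliZ_mul_siteOp_pauliZ, walshHadamard_mulVec_oneAxisTwisted, dotProduct]
  simp only [sum_fun_fin_succ, Fin.zero_eta, Fin.mk_one, Pi.star_apply,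
    siteOp_pauliX_mul_siteOp_pauliX_mulVec_cons_cons, star_oneAxisTwistedXBasis_mul_flip,
    ← mul_sum, sum_exp_mul_sum_spinSign, Fin.sum_univ_two]
  have h2 : (2⁻¹ : ℂ) ^ (n + 2) * 2 ^ n = 4⁻¹ := by
    rw [pow_add, mul_right_comm, ← mul_pow]
    norm_num
  norm_num [spinSign, mul_pow]
  linear_combination (2 * Complex.cos θ ^ n + 2) * h2

end OneAxisTwisting
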